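/- For distinct x, y ∈ (0, π/2), the logarithmic mean of cos x and cos y satisfies L(cos x, cos y) ≤ cos(L(x, y)). -/

import Mathlib

noncomputable def logMean (a b : ℝ) : ℝ := (a - b) / (Real.log a - Real.log b)

/-!
The logarithmic mean lies below the arithmetic mean, and on `(0, π/2)` the cosine is positive,
decreasing and satisfies
`(cos x + cos y) / 2 = cos ((x + y) / 2) cos ((x - y) / 2) ≤ cos ((x + y) / 2)`.
Hence `L(cos x, cos y) ≤ (cos x + cos y) / 2 ≤ cos ((x + y) / 2) ≤ cos (L(x, y))`.
-/

open Real

lemma logMean_comm (a b : ℝ) : logMean a b = logMean b a := by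
  rw [logMean, logMean, ← neg_sub b a, ← neg_sub (log b) (log a), neg_div_neg_eq]

lemma logMean_nonneg {a b : ℝ} (ha : 0 < a) (hb : 0 < b) : 0 ≤ logMean a b := by
  rcases le_total b a with hba | hab
  · exact div_nonneg (sub_nonneg.mpr hba) (sub_nonneg.mpr (log_le_log hb hba))
  · exact div_nonneg_of_nonpos (sub_nonpos.mpr hab) (sub_nonpos.mpr (log_le_log ha hab))

lemma two_mul_sub_div_add_le_log_sub_log {a b : ℝ} (hb : 0 < b) (hba : b ≤ a) :
    2 * (a - b) / (a + b) ≤ log a - log b := by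
  have h := le_log_one_add_of_nonneg (x := a / b - 1) (sub_nonneg.mpr ((one_le_div hb).mpr hba))
  have hrat : 2 * (a / b - 1) / (a / b - 1 + 2) = 2 * (a - b) / (a + b) := by
    field_simp
    ring
  rwa [hrat, add_sub_cancel, log_div (by linarith) hb.ne'] at h

lemma logMean_le_add_div_two {a b : ℝ} (ha : 0 < a) (hb : 0 < b) :
    logMean a b ≤ (a + b) / 2 := by
  wlog hba : b < a generalizing a b
  · rcases (not_lt.mp hba).eq_or_lt with rfl | hab
    · simp only [logMean, sub_self, zero_div]
      positivity
    · rw [logMean_comm, add_comm]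
      exact this hb ha hab
  have hlog : 0 < log a - log b := sub_pos.mpr (log_lt_log hb hba)
  have h := two_mul_sub_div_add_le_log_sub_log hb hba.le
  rw [div_le_iff₀ (by positivity)] at h
  rw [logMean, div_le_iff₀ hlog]
  linarith

lemma cos_add_cos_div_two_le {x y : ℝ} (h : 0 ≤ cos ((x + y) / 2)) :
    (cos x + cos y) / 2 ≤ cos ((x + y) / 2) := by
  rw [cos_add_cos, mul_assoc, mul_div_cancel_left₀ _ two_ne_zero]
  exact mul_le_of_le_one_right h (cos_le_one _)

theorem stmt7_general (x y : ℝ) (hx : x ∈ Set.Ioo 0 (π / 2)) (hy : y ∈ Set.Ioo 0 (π / 2)) :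
    logMean (Real.cos x) (Real.cos y) ≤ Real.cos (logMean x y) := by
  obtain ⟨hx0, hx2⟩ := hx
  obtain ⟨hy0, hy2⟩ := hy
  have hcos_pos {t : ℝ} (h0 : 0 < t) (h2 : t < π / 2) : 0 < cos t :=
    cos_pos_of_mem_Ioo ⟨by linarith, h2⟩
  calc logMean (cos x) (cos y) ≤ (cos x + cos y) / 2 :=
        logMean_le_add_div_two (hcos_pos hx0 hx2) (hcos_pos hy0 hy2)
    _ ≤ cos ((x + y) / 2) := cos_add_cos_div_two_le (hcos_pos (by linarith) (by linarith)).le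
    _ ≤ cos (logMean x y) :=
        cos_le_cos_of_nonneg_of_le_pi (logMean_nonneg hx0 hy0) (by linarith [pi_pos])
          (logMean_le_add_div_two hx0 hy0)

theorem stmt7 (x y : ℝ) (hx : x ∈ Set.Ioo 0 (π / 2)) (hy : y ∈ Set.Ioo 0 (π / 2))
    (hxy : x ≠ y) :
    logMean (Real.cos x) (Real.cos y) ≤ Real.cos (logMean x y) :=
  stmt7_general x y hx hy
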